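/- Let u₀(τ)=√2·exp(−τ) and u₂(τ)=(τ²/4 − 1/8)·u₀(τ) for τ≥0. Then: (i) −u₂''(τ) + u₂(τ) = (τ − 1/2)·u₀(τ) for all τ≥0; (ii) u₂'(0) = −u₂(0); and (iii) ∫₀^∞ (τ − 1/2)·u₀(τ)² dτ = 0, i.e. (τ−1/2)u₀ is orthogonal to u₀ in L²(0,∞). -/

import Mathlib

open MeasureTheory Set

noncomputable section

/-- The normalized ground state `u₀(τ) = √2 exp(-τ)`. -/
def u0 (τ : ℝ) : ℝ := Real.sqrt 2 * Real.exp (-τ)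

/-- The second-order corrector `u₂(τ) = (τ²/4 - 1/8) u₀(τ)`. -/
def u2 (τ : ℝ) : ℝ := (τ ^ 2 / 4 - 1 / 8) * u0 τ

lemma u0_hasDerivAt (τ : ℝ) : HasDerivAt u0 (-(u0 τ)) τ := by
  have h := ((hasDerivAt_neg τ).exp).const_mul (Real.sqrt 2)
  unfold u0
  refine h.congr_deriv ?_
  ring

lemma u2_hasDerivAt (τ : ℝ) :
    HasDerivAt u2 ((-(τ ^ 2) / 4 + τ / 2 + 1 / 8) * u0 τ) τ := by
  have hp : HasDerivAt (fun τ : ℝ => τ ^ 2 / 4 - 1 / 8) (τ / 2) τ := by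
    have := ((hasDerivAt_pow 2 τ).div_const 4).sub_const (1 / 8 : ℝ)
    refine this.congr_deriv ?_
    ring
  have h := hp.mul (u0_hasDerivAt τ)
  refine h.congr_deriv ?_
  ring

lemma deriv_u2 : deriv u2 = fun τ => (-(τ ^ 2) / 4 + τ / 2 + 1 / 8) * u0 τ :=
  funext fun τ => (u2_hasDerivAt τ).deriv

lemma deriv2_u2 (τ : ℝ) :
    HasDerivAt (deriv u2) ((τ ^ 2 / 4 - 1 / 8 - τ + 1 / 2) * u0 τ) τ := by
  rw [deriv_u2]
  have hp : HasDerivAt (fun τ : ℝ => -(τ ^ 2) / 4 + τ / 2 + 1 / 8) (-τ / 2 + 1 / 2) τ := by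
    have := (((hasDerivAt_pow 2 τ).neg.div_const 4).add
      ((hasDerivAt_id τ).div_const 2)).add_const (1 / 8 : ℝ)
    refine this.congr_deriv ?_
    simp [id]
    ring
  have h := hp.mul (u0_hasDerivAt τ)
  refine h.congr_deriv ?_
  ring

lemma u0_sq (τ : ℝ) : (u0 τ) ^ 2 = 2 * Real.exp (-2 * τ) := by
  rw [u0, mul_pow, Real.sq_sqrt (by norm_num : (0:ℝ) ≤ 2), pow_two, ← Real.exp_add]
  ring_nf

/-- The second-order corrector equation, the Robin boundary condition, and the solvability
(orthogonality) condition in the formal expansion of the ground state of the weighted 1D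
operator `𝓗_h`: (i) `-u₂'' + u₂ = (τ - 1/2)u₀` for `τ ≥ 0`; (ii) `u₂'(0) = -u₂(0)`;
(iii) `∫₀^∞ (τ - 1/2) u₀(τ)² dτ = 0`. -/
theorem corrector_equation :
    (∀ τ : ℝ, 0 ≤ τ → -(deriv (deriv u2) τ) + u2 τ = (τ - 1 / 2) * u0 τ) ∧
    deriv u2 0 = -u2 0 ∧
    (∫ τ in Ioi (0 : ℝ), (τ - 1 / 2) * (u0 τ) ^ 2) = 0 := by
  refine ⟨?_, ?_, ?_⟩
  · intro τ _
    rw [(deriv2_u2 τ).deriv, u2]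
    ring
  · rw [deriv_u2, u2]
    norm_num
  · -- the antiderivative is `F τ = -τ exp (-2τ)`
    set F : ℝ → ℝ := fun τ => -τ * Real.exp (-2 * τ) with hF
    have hderiv : ∀ x ∈ Ici (0:ℝ), HasDerivAt F ((x - 1 / 2) * (u0 x) ^ 2) x := by
      intro x _
      have h1 : HasDerivAt (fun τ : ℝ => Real.exp (-2 * τ))
          (Real.exp (-2 * x) * (-2 * 1)) x := ((hasDerivAt_id x).const_mul (-2)).exp
      have h := (hasDerivAt_neg x).mul h1
      refine h.congr_deriv ?_
      rw [u0_sq]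
      ring
    have hexp : Filter.Tendsto (fun x : ℝ => Real.exp (-x)) Filter.atTop (nhds 0) := by
      simpa using Real.tendsto_exp_comp_nhds_zero.mpr Filter.tendsto_neg_atTop_atBot
    have hpow := Real.tendsto_pow_mul_exp_neg_atTop_nhds_zero 1
    have htop : Filter.Tendsto F Filter.atTop (nhds 0) := by
      have h := (hpow.mul hexp).neg
      simp only [neg_zero, mul_zero] at h
      refine h.congr fun x => ?_
      rw [hF, pow_one, mul_assoc, ← Real.exp_add]
      ring_nf
    have hint : IntegrableOn (fun τ : ℝ => (τ - 1 / 2) * (u0 τ) ^ 2) (Ioi 0) := by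
      refine integrable_of_isBigO_exp_neg (one_pos) ?_ ?_
      · apply Continuous.continuousOn
        unfold u0
        fun_prop
      · have h1 : Filter.Tendsto (fun x : ℝ => (2 * x - 1) * Real.exp (-x))
            Filter.atTop (nhds 0) := by
          have hc := (hpow.const_mul 2).sub hexp
          simp only [mul_zero, sub_zero] at hc
          refine hc.congr fun x => by ring
        have h2 : Filter.Tendsto (fun x : ℝ => ((x - 1 / 2) * (u0 x) ^ 2) / Real.exp (-1 * x))
            Filter.atTop (nhds 0) := by
          refine h1.congr fun x => ?_
          rw [u0_sq, eq_div_iff (Real.exp_ne_zero _), mul_assoc, ← Real.exp_add]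
          ring_nf
        exact ((Asymptotics.isLittleO_iff_tendsto
          (fun x hx => absurd hx (Real.exp_ne_zero _))).mpr h2).isBigO
    have := integral_Ioi_of_hasDerivAt_of_tendsto' (f := F) hderiv hint htop
    rw [this, hF]
    norm_num

end
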